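/- Let ε ∈ [0,1) and let k ≥ 1 be an integer. Then R_ε attains no local maximum on the boundary of the cube [0,1]^k: if (δ₀,…,δ_{k−1}) ∈ [0,1]^k has some coordinate equal to 0 or to 1, then (δ₀,…,δ_{k−1}) is not a local maximum point of the restriction of R_ε to [0,1]^k. -/

import Mathlib

/-- The binary entropy function (base 2), with `H2 0 = H2 1 = 0`. -/
noncomputable def H2 (x : ℝ) : ℝ := -(x * Real.logb 2 x) - (1 - x) * Real.logb 2 (1 - x)

/-- The function `R_ε(δ₀,…,δ_{k−1})`. -/
noncomputable def Rfun (ε : ℝ) (k : ℕ) (δ : ℕ → ℝ) : ℝ :=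
  (∑ i ∈ Finset.range k, (1 - ε) ^ (i + 1) * H2 (δ i) * ∏ m ∈ Finset.range i, δ m) /
  (1 + ∑ i ∈ Finset.range k, (1 - ε) ^ (i + 1) * ∏ m ∈ Finset.range (i + 1), δ m)

/-!
Let `j` be the first coordinate of `δ` equal to `0` or `1`. Along the segment that moves only
`δ_j` through `[0, 1]`, numerator and denominator of `R_ε` are affine in `δ_j`, except for the
term `c · H₂(δ_j)` of the numerator, whose coefficient `c = ε̄^{j+1} δ₀ ⋯ δ_{j-1}` is positive by
the choice of `j`. Since `H₂(t)/t → ∞` as `t → 0⁺` and `H₂(1 - t) = H₂(t)`, this entropy term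
beats every affine perturbation near both ends of the segment, so `R_ε` increases as `δ_j` moves
into the interior.
-/

open Filter Function Real Set Topology

lemma H2_zero : H2 0 = 0 := by simp [H2]

lemma H2_one_sub (x : ℝ) : H2 (1 - x) = H2 x := by simp [H2]; ring

lemma tendsto_H2_div_nhdsGT_zero : Tendsto (fun t => H2 t / t) (𝓝[>] 0) atTop := by
  refine tendsto_atTop_mono' _ ?_
    (tendsto_neg_atBot_atTop.comp (tendsto_logb_nhdsGT_zero one_lt_two))
  filter_upwards [Ioo_mem_nhdsGT one_pos] with t ⟨ht0, ht1⟩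
  have : logb 2 (1 - t) ≤ 0 := logb_nonpos one_lt_two (by linarith) (by linarith)
  rw [comp_apply, le_div_iff₀ ht0, H2]
  nlinarith

/-- The restriction of `R_ε` to a segment parallel to a coordinate axis. -/
noncomputable def entropyRatio (A B c D E t : ℝ) : ℝ := (A + c * H2 t + B * t) / (D + E * t)

section entropyRatio

variable {A B c D E : ℝ}

lemma entropyRatio_one_sub (t : ℝ) :
    entropyRatio A B c D E (1 - t) = entropyRatio (A + B) (-B) c (D + E) (-E) t := by
  simp only [entropyRatio, H2_one_sub]
  ring_nf

lemma eventually_entropyRatio_zero_lt (hc : 0 < c) (hD : 0 < D) :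
    ∀ᶠ t in 𝓝[>] 0, entropyRatio A B c D E 0 < entropyRatio A B c D E t := by
  have hden : ∀ᶠ t in 𝓝 (0 : ℝ), 0 < D + E * t :=
    continuousAt_const.eventually_lt (by fun_prop) (by simpa using hD)
  filter_upwards [nhdsWithin_le_nhds hden,
    tendsto_H2_div_nhdsGT_zero.eventually_gt_atTop ((A * E - B * D) / (c * D)),
    self_mem_nhdsWithin] with t hden hH (ht : 0 < t)
  rw [div_lt_div_iff₀ (mul_pos hc hD) ht] at hH
  simp only [entropyRatio, H2_zero, mul_zero, add_zero]
  rw [div_lt_div_iff₀ hD hden]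
  linarith

lemma not_isLocalMaxOn_entropyRatio_zero (hc : 0 < c) (hD : 0 < D) :
    ¬ IsLocalMaxOn (entropyRatio A B c D E) (Icc 0 1) 0 := by
  intro hmax
  have hle : ∀ᶠ t in 𝓝[>] 0, entropyRatio A B c D E t ≤ entropyRatio A B c D E 0 :=
    nhdsWithin_le_of_mem (mem_of_superset (Ioo_mem_nhdsGT one_pos) Ioo_subset_Icc_self) hmax
  obtain ⟨t, hle, hlt⟩ := (hle.and (eventually_entropyRatio_zero_lt hc hD)).exists
  exact hlt.not_ge hle

lemma not_isLocalMaxOn_entropyRatio_one (hc : 0 < c) (hDE : 0 < D + E) :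
    ¬ IsLocalMaxOn (entropyRatio A B c D E) (Icc 0 1) 1 := by
  intro hmax
  have hmaps : MapsTo (fun t : ℝ => 1 - t) (Icc 0 1) (Icc 0 1) := fun t ht =>
    ⟨by linarith [ht.2], by linarith [ht.1]⟩
  have hreflect := (show IsLocalMaxOn _ _ ((fun t : ℝ => 1 - t) 0) by simpa using hmax)
    |>.comp_continuousOn hmaps.subset_preimage (by fun_prop) (left_mem_Icc.2 zero_le_one)
  refine not_isLocalMaxOn_entropyRatio_zero (A := A + B) (B := -B) (E := -E) hc hDE ?_
  simpa only [comp_def, entropyRatio_one_sub] using hreflect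

end entropyRatio

section affine

variable {R : Type*} [CommSemiring R]

lemma exists_sum_eq_affine {ι : Type*} (s : Finset ι) (f : ι → R → R)
    (hf : ∀ i ∈ s, ∃ a b : R, ∀ t, f i t = a + b * t) :
    ∃ a b : R, ∀ t, ∑ i ∈ s, f i t = a + b * t := by
  induction s using Finset.cons_induction with
  | empty => exact ⟨0, 0, by simp⟩
  | cons i s _ ih =>
    obtain ⟨a, b, hab⟩ := hf i (Finset.mem_cons_self i s)
    obtain ⟨a', b', hab'⟩ := ih fun i hi => hf i (Finset.mem_cons_of_mem hi)
    exact ⟨a + a', b + b', fun t => by rw [Finset.sum_cons, hab, hab']; ring⟩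

lemma exists_prod_update_eq_affine {ι : Type*} [DecidableEq ι] (s : Finset ι) (x : ι → R)
    (j : ι) :
    ∃ a b : R, ∀ t, ∏ m ∈ s, update x j t m = a + b * t := by
  by_cases hj : j ∈ s
  · exact ⟨0, ∏ m ∈ s \ {j}, x m, fun t => by rw [Finset.prod_update_of_mem hj]; ring⟩
  · exact ⟨∏ m ∈ s, x m, 0, fun t => by rw [Finset.prod_update_of_notMem hj]; ring⟩

end affine

section Rfun

open Finset

variable (ε : ℝ) (k : ℕ)

noncomputable def Rnum (x : ℕ → ℝ) : ℝ :=
  ∑ i ∈ range k, (1 - ε) ^ (i + 1) * H2 (x i) * ∏ m ∈ range i, x m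

noncomputable def Rden (x : ℕ → ℝ) : ℝ :=
  1 + ∑ i ∈ range k, (1 - ε) ^ (i + 1) * ∏ m ∈ range (i + 1), x m

lemma Rfun_eq_div (x : ℕ → ℝ) : Rfun ε k x = Rnum ε k x / Rden ε k x := rfl

variable {ε k}

lemma one_le_Rden (hε : ε ≤ 1) {x : ℕ → ℝ} (hx : ∀ i < k, 0 ≤ x i) : 1 ≤ Rden ε k x :=
  le_add_of_nonneg_right <| sum_nonneg fun i hi =>
    mul_nonneg (pow_nonneg (sub_nonneg.2 hε) _) <| prod_nonneg fun m hm =>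
      hx m <| by have := mem_range.1 hi; have := mem_range.1 hm; omega

lemma exists_Rden_update_eq_affine (x : ℕ → ℝ) (j : ℕ) :
    ∃ a b : ℝ, ∀ t, Rden ε k (update x j t) = a + b * t := by
  obtain ⟨a, b, hab⟩ := exists_sum_eq_affine (range k)
    (fun i t => (1 - ε) ^ (i + 1) * ∏ m ∈ range (i + 1), update x j t m) fun i _ => by
      obtain ⟨a, b, hab⟩ := exists_prod_update_eq_affine (range (i + 1)) x j
      exact ⟨(1 - ε) ^ (i + 1) * a, (1 - ε) ^ (i + 1) * b, fun t => by rw [hab]; ring⟩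
  exact ⟨1 + a, b, fun t => by rw [Rden, hab]; ring⟩

lemma exists_Rnum_update_eq (x : ℕ → ℝ) {j : ℕ} (hj : j < k) :
    ∃ a b : ℝ, ∀ t, Rnum ε k (update x j t) =
      a + (1 - ε) ^ (j + 1) * (∏ m ∈ range j, x m) * H2 t + b * t := by
  obtain ⟨a, b, hab⟩ := exists_sum_eq_affine ((range k).erase j)
    (fun i t => (1 - ε) ^ (i + 1) * H2 (update x j t i) * ∏ m ∈ range i, update x j t m)
    fun i hi => by
      obtain ⟨a, b, hab⟩ := exists_prod_update_eq_affine (range i) x j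
      refine ⟨(1 - ε) ^ (i + 1) * H2 (x i) * a, (1 - ε) ^ (i + 1) * H2 (x i) * b, fun t => ?_⟩
      rw [update_of_ne (ne_of_mem_erase hi), hab]
      ring
  refine ⟨a, b, fun t => ?_⟩
  rw [Rnum, ← add_sum_erase _ _ (mem_range.2 hj), hab, update_self,
    prod_update_of_notMem (by simp)]
  ring

lemma not_isLocalMaxOn_Rfun_of_boundary_coord (hε : ε < 1) {δ : ℕ → ℝ}
    (hδ : ∀ i < k, δ i ∈ Icc (0 : ℝ) 1) {j : ℕ} (hj : j < k) (hpos : ∀ m < j, 0 < δ m)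
    (hδj : δ j = 0 ∨ δ j = 1) :
    ¬ IsLocalMaxOn (Rfun ε k) {x : ℕ → ℝ | ∀ i < k, x i ∈ Icc (0 : ℝ) 1} δ := by
  intro hmax
  obtain ⟨N₀, N₁, hN⟩ := exists_Rnum_update_eq (ε := ε) δ hj
  obtain ⟨D₀, D₁, hD⟩ := exists_Rden_update_eq_affine (ε := ε) (k := k) δ j
  set c := (1 - ε) ^ (j + 1) * ∏ m ∈ range j, δ m
  have hc : 0 < c :=
    mul_pos (pow_pos (sub_pos.2 hε) _) (prod_pos fun m hm => hpos m (mem_range.1 hm))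
  have hcube :
      MapsTo (update δ j) (Icc 0 1) {x : ℕ → ℝ | ∀ i < k, x i ∈ Icc (0 : ℝ) 1} := by
    intro t ht i hi
    rcases eq_or_ne i j with rfl | hij
    · simpa using ht
    · simpa [hij] using hδ i hi
  have hden : ∀ t ∈ Icc (0 : ℝ) 1, 1 ≤ D₀ + D₁ * t := fun t ht =>
    hD t ▸ one_le_Rden hε.le fun i hi => (hcube ht i hi).1
  have hslice : Rfun ε k ∘ update δ j = entropyRatio N₀ N₁ c D₀ D₁ := by
    ext t
    simp only [comp_apply, Rfun_eq_div, hN, hD, entropyRatio]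
  have hmax' : IsLocalMaxOn (entropyRatio N₀ N₁ c D₀ D₁) (Icc 0 1) (δ j) := by
    rw [← hslice]
    exact IsLocalMaxOn.comp_continuousOn (by rwa [update_eq_self]) hcube.subset_preimage
      (by fun_prop) (hδ j hj)
  rcases hδj with h0 | h1
  · refine not_isLocalMaxOn_entropyRatio_zero hc ?_ (h0 ▸ hmax')
    simpa using zero_lt_one.trans_le (hden 0 (left_mem_Icc.2 zero_le_one))
  · refine not_isLocalMaxOn_entropyRatio_one hc ?_ (h1 ▸ hmax')
    simpa using zero_lt_one.trans_le (hden 1 (right_mem_Icc.2 zero_le_one))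

end Rfun

theorem no_local_max_on_boundary_general
    (ε : ℝ) (hε : ε ∈ Set.Ico (0 : ℝ) 1) (k : ℕ)
    (δ : ℕ → ℝ) (hδ : ∀ i < k, δ i ∈ Set.Icc (0 : ℝ) 1)
    (hbdry : ∃ j < k, δ j = 0 ∨ δ j = 1) :
    ¬ IsLocalMaxOn (fun x : ℕ → ℝ => Rfun ε k x)
        {x : ℕ → ℝ | ∀ i < k, x i ∈ Set.Icc (0 : ℝ) 1} δ := by
  classical
  obtain ⟨hjk, hδj⟩ := Nat.find_spec hbdry
  refine not_isLocalMaxOn_Rfun_of_boundary_coord hε.2 hδ hjk (fun m hm => ?_) hδj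
  have hmk := hm.trans hjk
  exact (hδ m hmk).1.lt_of_ne fun h => Nat.find_min hbdry hm ⟨hmk, .inl h.symm⟩

/-- Let `ε ∈ [0,1)` and `k ≥ 1`.  `R_ε` attains no local maximum on the boundary of the
cube `[0,1]^k`: if some coordinate of `(δ₀,…,δ_{k−1}) ∈ [0,1]^k` equals `0` or `1`, then
this point is not a local maximum point of the restriction of `R_ε` to the cube. -/
theorem no_local_max_on_boundary
    (ε : ℝ) (hε : ε ∈ Set.Ico (0 : ℝ) 1) (k : ℕ) (hk : 1 ≤ k)
    (δ : ℕ → ℝ) (hδ : ∀ i < k, δ i ∈ Set.Icc (0 : ℝ) 1)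
    (hbdry : ∃ j < k, δ j = 0 ∨ δ j = 1) :
    ¬ IsLocalMaxOn (fun x : ℕ → ℝ => Rfun ε k x)
        {x : ℕ → ℝ | ∀ i < k, x i ∈ Set.Icc (0 : ℝ) 1} δ :=
  no_local_max_on_boundary_general ε hε k δ hδ hbdry
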